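/- arXiv:1605.04136 — 7 statements merged into one kernel-verified Lean document; each statement's English description precedes it below -/
import Mathlib

section
/- The pointwise union of an arbitrary family of respectful functions is respectful. That is, if (F_i)_{i∈I} is a family of respectful functions on binary relations over the states, then the function R ↦ ⋃_{i∈I} F_i(R) is respectful. -/
universe u v

/-- `Progress Tr R S` means relation `R` progresses to relation `S`
in the labelled transition system with transition relation `Tr`. -/
def Progress {St : Type u} {Δ : Type v} (Tr : St → Δ → St → Prop)
    (R S : Set (St × St)) : Prop :=
  ∀ p q, (p, q) ∈ R →
    (∀ a p', Tr p a p' → ∃ q', Tr q a q' ∧ (p', q') ∈ S) ∧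
    (∀ a q', Tr q a q' → ∃ p', Tr p a p' ∧ (p', q') ∈ S)

/-- A function on relations is respectful if whenever `R ⊆ S` and `R ⤳ S`,
also `F R ⊆ F S` and `F R ⤳ F S`. -/
def Respectful {St : Type u} {Δ : Type v} (Tr : St → Δ → St → Prop)
    (F : Set (St × St) → Set (St × St)) : Prop :=
  ∀ R S : Set (St × St), R ⊆ S → Progress Tr R S →
    F R ⊆ F S ∧ Progress Tr (F R) (F S)

theorem respectful_iUnion {St : Type u} {Δ : Type v} (Tr : St → Δ → St → Prop)
    {I : Type w} (F : I → Set (St × St) → Set (St × St))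
    (hF : ∀ i, Respectful Tr (F i)) :
    Respectful Tr (fun R => ⋃ i, F i R) := by
  intro R S hRS hprog
  constructor
  · intro x hx
    simp only [Set.mem_iUnion] at hx ⊢
    obtain ⟨i, hi⟩ := hx
    exact ⟨i, (hF i R S hRS hprog).1 hi⟩
  · intro p q hpq
    simp only [Set.mem_iUnion] at hpq
    obtain ⟨i, hi⟩ := hpq
    obtain ⟨h1, h2⟩ := (hF i R S hRS hprog).2 p q hi
    constructor
    · intro a p' h
      obtain ⟨q', hq', hm⟩ := h1 a p' h
      exact ⟨q', hq', Set.mem_iUnion.2 ⟨i, hm⟩⟩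
    · intro a q' h
      obtain ⟨p', hp', hm⟩ := h2 a q' h
      exact ⟨p', hp', Set.mem_iUnion.2 ⟨i, hm⟩⟩
end

section
/- Consider the labelled transition system whose states are the ordinals, with a single (elided) label, and transitions given by ordinal membership, i.e., α ⟶ β iff β < α. Then for all ordinals α, β, γ with α < β: α ∼_γ β if and only if γ ≤ α. -/
universe u v

/-- Milner's stratification of bisimilarity: `∼₀ = univ`,
`∼_{α+1} = ⋃ {X | X ⤳ ∼_α}`, `∼_λ = ⋂_{β<λ} ∼_β` for limits. -/
noncomputable def Strat {St : Type u} {Δ : Type v} (Tr : St → Δ → St → Prop)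
    (α : Ordinal.{w}) : Set (St × St) :=
  Ordinal.limitRecOn α
    Set.univ
    (fun _ ih => ⋃₀ {X | Progress Tr X ih})
    (fun o _ ih => ⋂ (β : Ordinal.{w}) (h : β < o), ih β h)

/-!
Induction on `γ`. At a successor `δ + 1`, the move `β ⟶ α` must be answered by some `p' < α`
with `p' ∼_δ α`, which by induction forces `δ ≤ p' < α`. Conversely, if `δ < α`, a move of `β`
to some `q' ≥ α` is answered by `α ⟶ δ`, as `δ ∼_δ q'`; every other move is answered by the same
state, since each `∼_δ` is reflexive.
-/

namespace Strat

variable {St : Type u} {Δ : Type v} {Tr : St → Δ → St → Prop}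

theorem zero_eq : Strat Tr (0 : Ordinal.{w}) = Set.univ := by
  rw [Strat, Ordinal.limitRecOn_zero]

theorem mem_add_one_iff {δ : Ordinal.{w}} {p q : St} :
    (p, q) ∈ Strat Tr (δ + 1) ↔
      (∀ a p', Tr p a p' → ∃ q', Tr q a q' ∧ (p', q') ∈ Strat Tr δ) ∧
      (∀ a q', Tr q a q' → ∃ p', Tr p a p' ∧ (p', q') ∈ Strat Tr δ) := by
  rw [Strat, Ordinal.limitRecOn_add_one]
  constructor
  · rintro ⟨X, hX, hpq⟩
    exact hX p q hpq
  · intro h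
    refine ⟨{(p, q)}, ?_, rfl⟩
    rintro _ _ ⟨⟩
    exact h

theorem mem_limit_iff {γ : Ordinal.{w}} (hγ : Order.IsSuccLimit γ) {p q : St} :
    (p, q) ∈ Strat Tr γ ↔ ∀ δ < γ, (p, q) ∈ Strat Tr δ := by
  rw [Strat, Ordinal.limitRecOn_limit _ _ _ _ hγ]
  simp only [Set.mem_iInter]
  rfl

theorem diag_mem (γ : Ordinal.{w}) (p : St) : (p, p) ∈ Strat Tr γ := by
  induction γ using Ordinal.limitRecOn generalizing p with
  | zero => rw [zero_eq]; trivial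
  | add_one δ ih =>
    exact mem_add_one_iff.mpr ⟨fun _ p' hp' => ⟨p', hp', ih p'⟩, fun _ q' hq' => ⟨q', hq', ih q'⟩⟩
  | limit γ hγ ih => exact (mem_limit_iff hγ).mpr fun δ hδ => ih δ hδ p

end Strat

open Strat

theorem strat_ordinal_lts (α β γ : Ordinal.{u}) (hαβ : α < β) :
    (α, β) ∈ Strat (fun (a : Ordinal.{u}) (_ : Unit) (b : Ordinal.{u}) => b < a) γ ↔
      γ ≤ α := by
  induction γ using Ordinal.limitRecOn generalizing α β with
  | zero => simp [zero_eq]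
  | add_one δ ih =>
    rw [mem_add_one_iff, Order.add_one_le_iff]
    constructor
    · rintro ⟨-, back⟩
      obtain ⟨p', hp'α, hp'⟩ := back () α hαβ
      exact ((ih p' α hp'α).mp hp').trans_lt hp'α
    · intro hδα
      refine ⟨fun _ p' hp' => ⟨p', hp'.trans hαβ, diag_mem δ p'⟩, fun _ q' hq' => ?_⟩
      rcases lt_or_ge q' α with hq'α | hαq'
      · exact ⟨q', hq'α, diag_mem δ q'⟩
      · exact ⟨δ, hδα, (ih δ q' (hδα.trans_le hαq')).mpr le_rfl⟩
  | limit γ hγ ih =>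
    rw [mem_limit_iff hγ, hγ.le_iff_forall_le]
    exact forall₂_congr fun δ hδ => ih δ hδ α β hαβ
end

section
/- For any ordinal α there exists a labelled transition system in which the relations ∼_α and ∼_{α+1} are distinct. Concretely, in the transition system whose states are the ordinals less than or equal to α+1, with a single label and transitions β ⟶ γ iff γ < β, one has α ∼_α α+1 but not α ∼_{α+1} α+1. -/
universe u v

/-! In the system of ordinals `≤ μ` where every ordinal steps down to each smaller one, two
distinct states are `∼_δ`-related exactly when both are `≥ δ`: by induction, a move from the
larger state to the smaller one `r` can only be answered by a move to some `r' < r`, and that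
pair survives `∼_δ` only if `δ ≤ r' < r`. -/

section Stratification

variable {St : Type u} {Δ : Type v} (Tr : St → Δ → St → Prop)

theorem strat_zero : Strat Tr (0 : Ordinal.{w}) = Set.univ := by
  rw [Strat, Ordinal.limitRecOn_zero]

theorem strat_add_one (δ : Ordinal.{w}) :
    Strat Tr (δ + 1) = ⋃₀ {X | Progress Tr X (Strat Tr δ)} := by
  rw [Strat, Ordinal.limitRecOn_add_one]
  rfl

theorem strat_of_isSuccLimit {o : Ordinal.{w}} (ho : Order.IsSuccLimit o) :
    Strat Tr o = ⋂ (β : Ordinal.{w}) (_ : β < o), Strat Tr β := by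
  rw [Strat, Ordinal.limitRecOn_limit _ _ _ _ ho]
  rfl

variable {Tr}

theorem progress_of_symmetric {R S : Set (St × St)}
    (hR : ∀ p q, (p, q) ∈ R → (q, p) ∈ R) (hS : ∀ p q, (p, q) ∈ S → (q, p) ∈ S)
    (h : ∀ p q, (p, q) ∈ R → ∀ a p', Tr p a p' → ∃ q', Tr q a q' ∧ (p', q') ∈ S) :
    Progress Tr R S := by
  refine fun p q hpq => ⟨h p q hpq, fun a q' hq' => ?_⟩
  obtain ⟨p', hp', hqp'⟩ := h q p (hR p q hpq) a q' hq'
  exact ⟨p', hp', hS q' p' hqp'⟩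

end Stratification

section Descent

variable {μ : Ordinal.{u}}

variable (μ) in
def descentTr (a : Set.Iic μ) (_ : Unit) (b : Set.Iic μ) : Prop := b.1 < a.1

variable (μ) in
def eqOrBothGE (δ : Ordinal.{u}) : Set (Set.Iic μ × Set.Iic μ) :=
  {pq | pq.1 = pq.2 ∨ δ ≤ pq.1.1 ∧ δ ≤ pq.2.1}

theorem eqOrBothGE_symm {δ : Ordinal.{u}} {p q : Set.Iic μ} (h : (p, q) ∈ eqOrBothGE μ δ) :
    (q, p) ∈ eqOrBothGE μ δ :=
  h.imp Eq.symm And.symm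

theorem le_of_mem_eqOrBothGE_of_lt {δ : Ordinal.{u}} {p q : Set.Iic μ}
    (h : (p, q) ∈ eqOrBothGE μ δ) (hpq : p.1 < q.1) : δ ≤ p.1 :=
  (h.resolve_left fun he => hpq.ne (congrArg Subtype.val he)).1

theorem eqOrBothGE_zero : eqOrBothGE μ 0 = Set.univ :=
  Set.eq_univ_of_forall fun _ => Or.inr ⟨zero_le, zero_le⟩

/-- Against a pair `p ≠ q` both `≥ δ + 1`, a move to `p' < q` is copied and a move to
`p' ≥ q` is answered by the move to `δ`. -/
theorem progress_eqOrBothGE_add_one (δ : Ordinal.{u}) :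
    Progress (descentTr μ) (eqOrBothGE μ (δ + 1)) (eqOrBothGE μ δ) := by
  refine progress_of_symmetric (fun _ _ => eqOrBothGE_symm) (fun _ _ => eqOrBothGE_symm) ?_
  rintro p q (hpq | ⟨hp, hq⟩) _ p' hp'
  · obtain rfl : p = q := hpq
    exact ⟨p', hp', Or.inl rfl⟩
  by_cases hp'q : p'.1 < q.1
  · exact ⟨p', hp'q, Or.inl rfl⟩
  have hδq : δ < q.1 := Order.add_one_le_iff.mp hq
  refine ⟨⟨δ, hδq.le.trans q.2⟩, hδq, Or.inr ⟨?_, le_rfl⟩⟩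
  exact hδq.le.trans (not_lt.mp hp'q)

theorem subset_eqOrBothGE_add_one {δ : Ordinal.{u}} {X : Set (Set.Iic μ × Set.Iic μ)}
    (hX : Progress (descentTr μ) X (eqOrBothGE μ δ)) : X ⊆ eqOrBothGE μ (δ + 1) := by
  rintro ⟨p, q⟩ hpq
  simp only [eqOrBothGE, Set.mem_ofPred_eq, Order.add_one_le_iff]
  rcases lt_trichotomy p.1 q.1 with hlt | heq | hgt
  · obtain ⟨p', hp', hp'p⟩ := (hX p q hpq).2 () p hlt
    have hδp : δ < p.1 := (le_of_mem_eqOrBothGE_of_lt hp'p hp').trans_lt hp'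
    exact Or.inr ⟨hδp, hδp.trans hlt⟩
  · exact Or.inl (Subtype.ext heq)
  · obtain ⟨q', hq', hqq'⟩ := (hX p q hpq).1 () q hgt
    have hδq : δ < q.1 := (le_of_mem_eqOrBothGE_of_lt (eqOrBothGE_symm hqq') hq').trans_lt hq'
    exact Or.inr ⟨hδq.trans hgt, hδq⟩

theorem iInter_eqOrBothGE_of_isSuccLimit {o : Ordinal.{u}} (ho : Order.IsSuccLimit o) :
    ⋂ (β : Ordinal.{u}) (_ : β < o), eqOrBothGE μ β = eqOrBothGE μ o := by
  ext ⟨p, q⟩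
  by_cases hpq : p = q
  · simp [eqOrBothGE, hpq]
  · simp [eqOrBothGE, hpq, ho.le_iff_forall_le, imp_and, forall_and]

theorem strat_descentTr (δ : Ordinal.{u}) : Strat (descentTr μ) δ = eqOrBothGE μ δ := by
  induction δ using Ordinal.limitRecOn with
  | zero => rw [strat_zero, eqOrBothGE_zero]
  | add_one δ ih =>
    rw [strat_add_one, ih]
    exact (Set.sUnion_subset fun _ => subset_eqOrBothGE_add_one).antisymm
      (Set.subset_sUnion_of_mem (progress_eqOrBothGE_add_one δ))
  | limit o ho ih =>
    rw [strat_of_isSuccLimit _ ho, ← iInter_eqOrBothGE_of_isSuccLimit ho]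
    exact Set.iInter₂_congr ih

theorem mem_strat_descentTr_iff_of_lt {δ : Ordinal.{u}} {p q : Set.Iic μ} (hpq : p.1 < q.1) :
    (p, q) ∈ Strat (descentTr μ) δ ↔ δ ≤ p.1 := by
  rw [strat_descentTr]
  exact ⟨(le_of_mem_eqOrBothGE_of_lt · hpq), fun h => Or.inr ⟨h, h.trans hpq.le⟩⟩

end Descent

theorem strat_distinct (α : Ordinal.{u}) :
    ((⟨α, (le_self_add : α ≤ α + 1)⟩ : Set.Iic (α + 1)), (⟨α + 1, Set.self_mem_Iic⟩ : Set.Iic (α + 1))) ∈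
      Strat (fun (a : Set.Iic (α + 1)) (_ : Unit) (b : Set.Iic (α + 1)) => b.1 < a.1) α ∧
    ((⟨α, (le_self_add : α ≤ α + 1)⟩ : Set.Iic (α + 1)), (⟨α + 1, Set.self_mem_Iic⟩ : Set.Iic (α + 1))) ∉
      Strat (fun (a : Set.Iic (α + 1)) (_ : Unit) (b : Set.Iic (α + 1)) => b.1 < a.1) (α + 1) ∧
    Strat (fun (a : Set.Iic (α + 1)) (_ : Unit) (b : Set.Iic (α + 1)) => b.1 < a.1) α ≠
      Strat (fun (a : Set.Iic (α + 1)) (_ : Unit) (b : Set.Iic (α + 1)) => b.1 < a.1) (α + 1) := by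
  have hlt : α < α + 1 := lt_add_one α
  have mem_iff (δ : Ordinal.{u}) :=
    mem_strat_descentTr_iff_of_lt (δ := δ) (p := ⟨α, hlt.le⟩) (q := ⟨α + 1, Set.self_mem_Iic⟩) hlt
  have mem := (mem_iff α).2 le_rfl
  have not_mem := fun h => hlt.not_ge ((mem_iff (α + 1)).1 h)
  exact ⟨mem, not_mem, fun h => not_mem (h ▸ mem)⟩
end

section
/- Let ε be the least ordinal such that ∼_{ε+1} = ∼_ε. Then ∼_ε is included in bisimilarity, i.e., ∼_ε ⊆ ⋃{X | X ⤳ X}. -/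
universe u v

theorem strat_eps_subset_bisimilarity {St : Type u} {Δ : Type v} (Tr : St → Δ → St → Prop)
    (ε : Ordinal.{u}) (hfix : Strat Tr (ε + 1) = Strat Tr ε)
    (hleast : ∀ β : Ordinal.{u}, Strat Tr (β + 1) = Strat Tr β → ε ≤ β) :
    Strat Tr ε ⊆ ⋃₀ {X | Progress Tr X X} := by
  have hsucc : Strat Tr (ε + 1) = ⋃₀ {X | Progress Tr X (Strat Tr ε)} := by
    simp [Strat, Ordinal.limitRecOn_succ]
  have hprog : Progress Tr (Strat Tr ε) (Strat Tr ε) := by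
    intro p q hpq
    rw [← hfix, hsucc] at hpq
    obtain ⟨X, hX, hmem⟩ := hpq
    obtain ⟨h1, h2⟩ := hX p q hmem
    exact ⟨h1, h2⟩
  exact fun x hx => ⟨Strat Tr ε, hprog, hx⟩
end

section
/- The function LRF is respectful: for all binary relations R and S on the states, if R ⊆ S and R ⤳ S, then LRF(R) ⊆ LRF(S) and LRF(R) ⤳ LRF(S). -/
universe u v

/-- `LRF R = ⋂ {∼_α | R ⊆ ∼_α}`. -/
noncomputable def LRF {St : Type u} {Δ : Type v} (Tr : St → Δ → St → Prop)
    (R : Set (St × St)) : Set (St × St) :=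
  ⋂ (α : Ordinal.{u}) (_ : R ⊆ Strat.{u, v, u} Tr α), Strat.{u, v, u} Tr α

/-!
The strata decrease, and strictly until they stabilise, so they stabilise at some ordinal of
universe `u` (otherwise they would embed `Ordinal.{u}` into `Set (St × St)`). Hence `LRF S` is
itself a stratum `∼_δ ⊇ S`: the last stratum containing `S`, or the stable one if all do. If
`R ⤳ S`, then `R ⤳ ∼_δ`, so `R ⊆ ∼_{δ+1}` and `LRF R ⊆ ∼_{δ+1} ⤳ ∼_δ = LRF S`.
-/

universe w

variable {St : Type u} {Δ : Type v} {Tr : St → Δ → St → Prop}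

theorem Progress.mono {R R' S S' : Set (St × St)} (h : Progress Tr R S) (hR : R' ⊆ R)
    (hS : S ⊆ S') : Progress Tr R' S' := by
  intro p q hpq
  obtain ⟨hfwd, hbwd⟩ := h p q (hR hpq)
  exact ⟨fun a p' ht => (hfwd a p' ht).imp fun _ => And.imp_right (@hS _),
    fun a q' ht => (hbwd a q' ht).imp fun _ => And.imp_right (@hS _)⟩

namespace Strat

variable (Tr)

@[simp]
theorem zero : Strat.{u, v, w} Tr 0 = Set.univ :=
  Ordinal.limitRecOn_zero _ _ _

theorem add_one (α : Ordinal.{w}) :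
    Strat.{u, v, w} Tr (α + 1) = ⋃₀ {X | Progress Tr X (Strat Tr α)} :=
  Ordinal.limitRecOn_add_one _ _ _ _

theorem of_isSuccLimit {γ : Ordinal.{w}} (hγ : Order.IsSuccLimit γ) :
    Strat.{u, v, w} Tr γ = ⋂ (β : Ordinal.{w}) (_ : β < γ), Strat Tr β :=
  Ordinal.limitRecOn_limit _ _ _ _ hγ

variable {Tr}

theorem subset_add_one_of_progress {X : Set (St × St)} {α : Ordinal.{w}}
    (h : Progress Tr X (Strat Tr α)) : X ⊆ Strat Tr (α + 1) := by
  rw [add_one]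
  exact Set.subset_sUnion_of_mem h

theorem progress_add_one (α : Ordinal.{w}) :
    Progress Tr (Strat.{u, v, w} Tr (α + 1)) (Strat Tr α) := by
  rw [add_one]
  rintro p q ⟨X, hX, hpq⟩
  exact hX p q hpq

theorem subset_of_progress {X : Set (St × St)} {α : Ordinal.{w}}
    (h : Progress Tr X (Strat Tr α)) : X ⊆ Strat Tr α := by
  induction α using Ordinal.limitRecOn generalizing X with
  | zero => simp
  | add_one δ ih =>
    exact subset_add_one_of_progress (h.mono subset_rfl (ih (progress_add_one δ)))
  | limit γ hγ ih =>
    rw [of_isSuccLimit Tr hγ] at h ⊢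
    exact Set.subset_iInter₂ fun β hβ => ih β hβ (h.mono subset_rfl (Set.iInter₂_subset β hβ))

theorem add_one_subset (α : Ordinal.{w}) : Strat.{u, v, w} Tr (α + 1) ⊆ Strat Tr α :=
  subset_of_progress (progress_add_one α)

theorem antitone : Antitone (Strat.{u, v, w} Tr) := by
  intro α β hαβ
  induction β using Ordinal.limitRecOn with
  | zero => rw [nonpos_iff_eq_zero.mp hαβ]
  | add_one δ ih =>
    rcases hαβ.eq_or_lt with rfl | hlt
    · exact subset_rfl
    · exact (add_one_subset δ).trans (ih (Order.lt_add_one_iff.mp hlt))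
  | limit γ hγ _ =>
    rcases hαβ.eq_or_lt with rfl | hlt
    · exact subset_rfl
    · rw [of_isSuccLimit Tr hγ]
      exact Set.iInter₂_subset α hlt

theorem subset_of_progress_self {X : Set (St × St)} (h : Progress Tr X X) (α : Ordinal.{w}) :
    X ⊆ Strat Tr α := by
  induction α using Ordinal.limitRecOn with
  | zero => simp
  | add_one δ ih => exact subset_add_one_of_progress (h.mono subset_rfl ih)
  | limit γ hγ ih =>
    rw [of_isSuccLimit Tr hγ]
    exact Set.subset_iInter₂ ih

theorem exists_add_one_eq : ∃ γ : Ordinal.{u}, Strat.{u, v, u} Tr (γ + 1) = Strat Tr γ := by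
  by_contra! hne
  have hanti : StrictAnti (Strat.{u, v, u} Tr) := fun α β hαβ =>
    (antitone (Order.add_one_le_of_lt hαβ)).trans_lt ((add_one_subset α).lt_of_ne (hne α))
  exact not_small_ordinal.{u, u} (small_of_injective hanti.injective)

end Strat

namespace LRF

theorem mono {R S : Set (St × St)} (h : R ⊆ S) : LRF Tr R ⊆ LRF Tr S :=
  Set.subset_iInter₂ fun α hα => Set.iInter₂_subset α (h.trans hα)

theorem exists_eq_strat (S : Set (St × St)) :
    ∃ δ : Ordinal.{u}, S ⊆ Strat Tr δ ∧ LRF Tr S = Strat Tr δ := by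
  by_cases hall : ∀ α, S ⊆ Strat Tr α
  · obtain ⟨γ, hγ⟩ := Strat.exists_add_one_eq (Tr := Tr)
    have hfix : Progress Tr (Strat Tr γ) (Strat Tr γ) := by
      simpa only [hγ] using Strat.progress_add_one (Tr := Tr) γ
    exact ⟨γ, hall γ, (Set.iInter₂_subset γ (hall γ)).antisymm
      (Set.subset_iInter₂ fun α _ => Strat.subset_of_progress_self hfix α)⟩
  push Not at hall
  obtain ⟨β, hβ, hmin⟩ := wellFounded_lt.has_min _ hall
  have hbelow : ∀ α < β, S ⊆ Strat Tr α := fun α hα => by_contra fun h => hmin α h hα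
  induction β using Ordinal.limitRecOn with
  | zero => exact absurd (by simp) hβ
  | add_one δ _ =>
    have hSδ : S ⊆ Strat Tr δ := hbelow δ (Order.lt_add_one_iff.2 le_rfl)
    refine ⟨δ, hSδ, (Set.iInter₂_subset δ hSδ).antisymm ?_⟩
    refine Set.subset_iInter₂ fun α hα => Strat.antitone (not_lt.1 fun hlt => ?_)
    exact hβ (hα.trans (Strat.antitone (Order.add_one_le_of_lt hlt)))
  | limit γ hγ _ =>
    exact absurd ((Strat.of_isSuccLimit Tr hγ).symm ▸ Set.subset_iInter₂ hbelow) hβ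

end LRF

theorem lrf_respectful {St : Type u} {Δ : Type v} (Tr : St → Δ → St → Prop) :
    Respectful Tr (LRF Tr) := by
  intro R S hRS hprog
  obtain ⟨δ, hSδ, hLRF⟩ := LRF.exists_eq_strat (Tr := Tr) S
  have hR : LRF Tr R ⊆ Strat Tr (δ + 1) :=
    Set.iInter₂_subset (δ + 1) (Strat.subset_add_one_of_progress (hprog.mono subset_rfl hSδ))
  exact ⟨LRF.mono hRS, hLRF ▸ (Strat.progress_add_one δ).mono hR subset_rfl⟩
end

section
/- Let (A, ≤) be a complete lattice and R a progression on A. Then the function f₀ : A → A defined by f₀(x) := ⨅{z_α | x ≤ z_α} is the unique largest R-monotone function: f₀ is R-monotone, and for every R-monotone function f : A → A and every x ∈ A, f(x) ≤ f₀(x). -/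
universe u

/-- A progression on a complete lattice `A` is a binary relation `R` with
`≤ ∘ R ∘ ≤ ⊆ R` and, for every `b`, `⨆ {a | a R b}` itself related to `b`. -/
def IsProgression {A : Type u} [CompleteLattice A] (R : A → A → Prop) : Prop :=
  (∀ a' a b b' : A, a' ≤ a → R a b → b ≤ b' → R a' b') ∧
  (∀ b : A, R (sSup {a | R a b}) b)

/-- The transfinite stratification associated with a relation `R`:
`z_0 = ⊤`, `z_{α+1} = ⨆ {a | a R z_α}`, `z_λ = ⨅_{β<λ} z_β` for limits. -/
noncomputable def zStrat {A : Type u} [CompleteLattice A] (R : A → A → Prop)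
    (α : Ordinal.{u}) : A :=
  Ordinal.limitRecOn α
    ⊤
    (fun _ ih => sSup {a | R a ih})
    (fun o _ ih => ⨅ (β : Ordinal.{u}) (h : β < o), ih β h)

/-- `f` is `R`-monotone: monotone with respect to `≤ ∩ R`. -/
def RMonotone {A : Type u} [CompleteLattice A] (R : A → A → Prop) (f : A → A) : Prop :=
  ∀ a b : A, a ≤ b → R a b → f a ≤ f b ∧ R (f a) (f b)

/-- The candidate largest function: `x ↦ ⨅ {z_α | x ≤ z_α}`. -/
noncomputable def lrfLat {A : Type u} [CompleteLattice A] (R : A → A → Prop) (x : A) : A :=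
  ⨅ (α : Ordinal.{u}) (_ : x ≤ zStrat R α), zStrat R α

/-!
Because a progression is down-closed on the left, `a R b ↔ a ≤ F b` for the monotone map
`F b := ⨆ {a | a R b}`; hence `z` is the approximation sequence `gfpApprox F ⊤` of the greatest
fixed point of `F`. That sequence is antitone and eventually constant, so `{z_α | x ≤ z_α}` has a
least element `z_γ = f₀ x`. If `a R b`, then `a ≤ F (z_γ) = z_{γ+1}` for `z_γ = f₀ b`, so
`f₀ a ≤ F (f₀ b)`, i.e. `f₀ a R f₀ b`. For an `R`-monotone `f`, induction on `α` gives
`x ≤ z_α → f x ≤ z_α`: for `β < α` one has `x ≤ z_α ≤ F z_β`, so `x R z_β` and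
`f x R f z_β ≤ z_β`.
-/

open OrdinalApprox Cardinal

section gfpApprox

variable {α : Type u} [CompleteLattice α] (f : α →o α) {x y : α}

theorem gfpApprox_ord_succ_card_le (hx : f x ≤ x) (a : Ordinal.{u}) :
    gfpApprox f x (ord (Order.succ #α)) ≤ gfpApprox f x a := by
  rw [← iInf_gfpApprox_eq_of_mem_fixedPoints f (gfpApprox_ord_mem_fixedPoint f hx)]
  exact iInf_le _ a

theorem exists_isLeast_image_gfpApprox (hx : f x ≤ x) (hy : y ≤ x) :
    ∃ γ, IsLeast (gfpApprox f x '' {a | y ≤ gfpApprox f x a}) (gfpApprox f x γ) := by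
  suffices ∃ γ, y ≤ gfpApprox f x γ ∧ ∀ a, y ≤ gfpApprox f x a → gfpApprox f x γ ≤ gfpApprox f x a by
    obtain ⟨γ, hyγ, hγ⟩ := this
    exact ⟨γ, ⟨γ, hyγ, rfl⟩, by rintro _ ⟨a, hya, rfl⟩; exact hγ a hya⟩
  -- otherwise `y` lies below every stage, in particular below the least one, the fixed point
  by_contra! H
  have hall : ∀ a, y ≤ gfpApprox f x a := by
    intro a
    induction a using WellFoundedLT.induction with | ind a ih =>
    rw [gfpApprox]
    refine le_inf hy (le_iInf₂ fun b hb => ?_)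
    obtain ⟨c, hyc, hbc⟩ := H b (ih b hb)
    have hbc : b < c := lt_of_not_ge fun hcb => hbc (gfpApprox_anti_right f hcb)
    exact hyc.trans (gfpApprox_le_apply_gfpApprox_of_lt f hbc)
  obtain ⟨a, -, ha⟩ := H _ (hall (ord (Order.succ #α)))
  exact ha (gfpApprox_ord_succ_card_le f hx a)

end gfpApprox

section lrfLat

variable {A : Type u} [CompleteLattice A] (R : A → A → Prop)

theorem lrfLat_le_zStrat {x : A} {o : Ordinal.{u}} (h : x ≤ zStrat R o) : lrfLat R x ≤ zStrat R o :=
  iInf₂_le o h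

theorem lrfLat_mono : Monotone (lrfLat R) :=
  fun _ _ hab => le_iInf₂ fun _ ho => lrfLat_le_zStrat R (hab.trans ho)

end lrfLat

namespace IsProgression

variable {A : Type u} [CompleteLattice A] {R : A → A → Prop} (hR : IsProgression R)
include hR

def step : A →o A where
  toFun b := sSup {a | R a b}
  monotone' _ _ h := sSup_le_sSup fun a ha => hR.1 a a _ _ le_rfl ha h

theorem rel_iff_le_step {a b : A} : R a b ↔ a ≤ hR.step b :=
  ⟨fun h => le_sSup h, fun h => hR.1 _ _ _ _ h (hR.2 b) le_rfl⟩

theorem zStrat_add_one (o : Ordinal.{u}) : zStrat R (o + 1) = hR.step (zStrat R o) :=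
  Ordinal.limitRecOn_add_one _ _ _ _

theorem zStrat_eq_gfpApprox : zStrat R = gfpApprox hR.step ⊤ := by
  funext o
  induction o using Ordinal.limitRecOn with
  | zero => rw [zStrat, Ordinal.limitRecOn_zero, gfpApprox_zero]
  | add_one o ih => rw [hR.zStrat_add_one, ih, gfpApprox_add_one _ le_top]
  | limit o ho ih =>
    rw [zStrat, Ordinal.limitRecOn_limit _ _ _ _ ho, gfpApprox_of_isSuccLimit _ ho, iInf_subtype']
    exact iInf_congr fun b => ih b b.2

theorem exists_lrfLat_eq_zStrat (x : A) : ∃ γ, x ≤ zStrat R γ ∧ lrfLat R x = zStrat R γ := by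
  obtain ⟨γ, hγ⟩ := exists_isLeast_image_gfpApprox hR.step le_top (le_top : x ≤ ⊤)
  rw [← hR.zStrat_eq_gfpApprox] at hγ
  obtain ⟨a, hxa, hza⟩ := hγ.1
  refine ⟨γ, hza ▸ hxa, ?_⟩
  simpa only [lrfLat, sInf_image, Set.mem_ofPred_eq] using hγ.isGLB.sInf_eq

theorem lrfLat_rel {a b : A} (hab : R a b) : R (lrfLat R a) (lrfLat R b) := by
  obtain ⟨γ, hbγ, hγ⟩ := hR.exists_lrfLat_eq_zStrat b
  have haγ : a ≤ zStrat R (γ + 1) := by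
    rw [hR.zStrat_add_one, ← hR.rel_iff_le_step]
    exact hR.1 _ _ _ _ le_rfl hab hbγ
  rw [hR.rel_iff_le_step, hγ, ← hR.zStrat_add_one]
  exact lrfLat_le_zStrat R haγ

theorem le_zStrat_of_rMonotone {f : A → A} (hf : RMonotone R f) {x : A} {o : Ordinal.{u}}
    (hx : x ≤ zStrat R o) : f x ≤ zStrat R o := by
  rw [hR.zStrat_eq_gfpApprox] at hx ⊢
  induction o using WellFoundedLT.induction generalizing x with | ind o ih =>
  rw [gfpApprox]
  refine le_inf le_top (le_iInf₂ fun b hb => ?_)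
  have hxb : x ≤ hR.step (gfpApprox hR.step ⊤ b) :=
    hx.trans (gfpApprox_le_apply_gfpApprox_of_lt _ hb)
  obtain ⟨-, hrel⟩ := hf x _ (hx.trans (gfpApprox_anti_right _ hb.le)) (hR.rel_iff_le_step.2 hxb)
  exact (hR.rel_iff_le_step.1 hrel).trans (hR.step.monotone (ih b hb le_rfl))

end IsProgression

theorem lrfLat_largest_RMonotone {A : Type u} [CompleteLattice A] (R : A → A → Prop)
    (hR : IsProgression R) :
    RMonotone R (lrfLat R) ∧
    ∀ f : A → A, RMonotone R f → ∀ x : A, f x ≤ lrfLat R x :=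
  ⟨fun _ _ hab hRab => ⟨lrfLat_mono R hab, hR.lrfLat_rel hRab⟩,
    fun _ hf _ => le_iInf₂ fun _ => hR.le_zStrat_of_rMonotone hf⟩
end

section
/- Let (A, ≤) be a complete lattice and R a progression on A. Then R ∩ ≤ (i.e., the relation holding of (a,b) iff a R b and a ≤ b) is also a progression on A. Moreover, for monotone functions f : A → A, f is R-monotone if and only if f is s_{R∩≤}-compatible. -/
universe u

theorem progression_inter_le {A : Type u} [CompleteLattice A] (R : A → A → Prop)
    (hR : IsProgression R) :
    IsProgression (fun a b => R a b ∧ a ≤ b) ∧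
    ∀ f : A → A, Monotone f →
      (RMonotone R f ↔
        ∀ x : A, f (sSup {a | R a x ∧ a ≤ x}) ≤ sSup {a | R a (f x) ∧ a ≤ f x}) := by
  obtain ⟨hclos, hsup⟩ := hR
  have hle : ∀ b : A, sSup {a | R a b ∧ a ≤ b} ≤ b := fun b =>
    sSup_le fun a ha => ha.2
  have hRs : ∀ b : A, R (sSup {a | R a b ∧ a ≤ b}) b := fun b =>
    hclos _ _ _ _ (sSup_le_sSup fun a ha => ha.1) (hsup b) le_rfl
  refine ⟨⟨fun a' a b b' ha hab hb => ⟨hclos a' a b b' ha hab.1 hb,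
      le_trans ha (le_trans hab.2 hb)⟩, fun b => ⟨hRs b, hle b⟩⟩, ?_⟩
  intro f hf
  constructor
  · intro hRM x
    obtain ⟨h1, h2⟩ := hRM _ _ (hle x) (hRs x)
    exact le_sSup ⟨h2, h1⟩
  · intro hc a b hab hRab
    refine ⟨hf hab, ?_⟩
    have h1 : f a ≤ sSup {c | R c (f b) ∧ c ≤ f b} :=
      le_trans (hf (le_sSup (Set.mem_setOf.mpr ⟨hRab, hab⟩))) (hc b)
    exact hclos _ _ _ _ h1 (hRs (f b)) le_rfl
end
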